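/- arXiv:2411.04729 — 5 statements merged into one kernel-verified Lean document; each statement's English description precedes it below -/
import Mathlib

section
/- Let G be a simple graph on the vertex set {1,…,p} with its natural linear order. If 1 ≤ ℓ < m < j ≤ p, the pair (ℓ,m) is a fill-in pair of G, and the pair (ℓ,j) is a fill-in pair of G, then (m,j) is a fill-in pair of G. -/
/-- For a simple graph `G` on `Fin p` with its natural linear order, the pair `(m, j)`
with `m < j` is a *fill-in pair* if there is a walk in `G` from `m` to `j` all of whose
intermediate vertices are strictly smaller than `m`. -/
def FillIn {p : ℕ} (G : SimpleGraph (Fin p)) (m j : Fin p) : Prop :=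
  m < j ∧ ∃ w : G.Walk m j, ∀ v ∈ w.support, v = m ∨ v = j ∨ v < m

/-- If `ℓ < m < j`, `(ℓ, m)` is a fill-in pair and `(ℓ, j)` is a fill-in pair,
then `(m, j)` is a fill-in pair. -/
theorem fillIn_trans {p : ℕ} (G : SimpleGraph (Fin p)) (l m j : Fin p)
    (hlm : l < m) (hmj : m < j)
    (h1 : FillIn G l m) (h2 : FillIn G l j) :
    FillIn G m j := by
  obtain ⟨-, w1, hw1⟩ := h1
  obtain ⟨-, w2, hw2⟩ := h2
  refine ⟨hmj, w1.reverse.append w2, ?_⟩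
  intro v hv
  rw [SimpleGraph.Walk.mem_support_append_iff] at hv
  rcases hv with hv | hv
  · rw [SimpleGraph.Walk.support_reverse, List.mem_reverse] at hv
    rcases hw1 v hv with h | h | h
    · right; right; exact h ▸ hlm
    · left; exact h
    · right; right; exact h.trans hlm
  · rcases hw2 v hv with h | h | h
    · right; right; exact h ▸ hlm
    · right; left; exact h
    · right; right; exact h.trans hlm
end

section
/- Under the random-intercept crossed effects design, every eigenvalue of Ū = Diag(U)^{−1/2} U Diag(U)^{−1/2} lies in the interval [0, K+1], and K+1 is an eigenvalue of Ū: the vector x ∈ ℝ^p with x[c] = √(U[c,c]) satisfies Ū x = (K+1) x. In particular the largest eigenvalue of Ū equals K+1. -/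
open Matrix

namespace Crossed

/-- The coordinates of the random-intercept crossed effects model: `none` is the global
intercept `θ₀` and `some ⟨k, a⟩` is the level `a` of factor `k`. -/
abbrev Idx (K : ℕ) (G : Fin K → ℕ) := Option (Σ k : Fin K, Fin (G k))

/-- The design matrix `V ∈ ℝ^{N×p}`. -/
noncomputable def V (K N : ℕ) (G : Fin K → ℕ) (g : Fin N → ∀ k : Fin K, Fin (G k)) :
    Matrix (Fin N) (Idx K G) ℝ :=
  fun i c => c.elim 1 (fun s => if g i s.1 = s.2 then 1 else 0)

/-- `U = Vᵀ V`. -/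
noncomputable def U (K N : ℕ) (G : Fin K → ℕ) (g : Fin N → ∀ k : Fin K, Fin (G k)) :
    Matrix (Idx K G) (Idx K G) ℝ :=
  (V K N G g)ᵀ * V K N G g

/-- `Ū = Diag(U)^{−1/2} U Diag(U)^{−1/2}`. -/
noncomputable def Ubar (K N : ℕ) (G : Fin K → ℕ) (g : Fin N → ∀ k : Fin K, Fin (G k)) :
    Matrix (Idx K G) (Idx K G) ℝ :=
  diagonal (fun c => (Real.sqrt (U K N G g c c))⁻¹) * U K N G g *
    diagonal (fun c => (Real.sqrt (U K N G g c c))⁻¹)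

section Aux

variable (K N : ℕ) (G : Fin K → ℕ) (g : Fin N → ∀ k : Fin K, Fin (G k))

lemma V_mul_self (i : Fin N) (c : Idx K G) :
    V K N G g i c * V K N G g i c = V K N G g i c := by
  cases c with
  | none => simp [V]
  | some s =>
    simp only [V, Option.elim]
    split <;> norm_num

lemma V_nonneg (i : Fin N) (c : Idx K G) : 0 ≤ V K N G g i c := by
  cases c with
  | none => simp [V]
  | some s =>
    simp only [V, Option.elim]
    split <;> norm_num

lemma U_diag (c : Idx K G) : U K N G g c c = ∑ i, V K N G g i c := by
  simp [U, Matrix.mul_apply, Matrix.transpose_apply, V_mul_self]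

lemma U_diag_pos (hN : 1 ≤ N)
    (hobs : ∀ (k : Fin K) (a : Fin (G k)), ∃ i, g i k = a) (c : Idx K G) :
    0 < U K N G g c c := by
  rw [U_diag]
  apply Finset.sum_pos'
  · intro i _
    exact V_nonneg K N G g i c
  · cases c with
    | none =>
      refine ⟨⟨0, hN⟩, Finset.mem_univ _, ?_⟩
      simp [V]
    | some s =>
      obtain ⟨i, hi⟩ := hobs s.1 s.2
      refine ⟨i, Finset.mem_univ _, ?_⟩
      simp [V, hi]

lemma sqrt_ne_zero (hN : 1 ≤ N)
    (hobs : ∀ (k : Fin K) (a : Fin (G k)), ∃ i, g i k = a) (c : Idx K G) :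
    Real.sqrt (U K N G g c c) ≠ 0 := by
  have := U_diag_pos K N G g hN hobs c
  positivity

lemma sqrt_mul_self (hN : 1 ≤ N)
    (hobs : ∀ (k : Fin K) (a : Fin (G k)), ∃ i, g i k = a) (c : Idx K G) :
    Real.sqrt (U K N G g c c) * Real.sqrt (U K N G g c c) = U K N G g c c :=
  Real.mul_self_sqrt (U_diag_pos K N G g hN hobs c).le

/-- row of `V` dotted with any vector. -/
lemma rowval (w : Idx K G → ℝ) (i : Fin N) :
    ∑ c, V K N G g i c * w c = w none + ∑ k, w (some ⟨k, g i k⟩) := by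
  rw [Fintype.sum_option]
  congr 1
  · simp [V]
  · rw [← Finset.univ_sigma_univ, Finset.sum_sigma]
    refine Finset.sum_congr rfl fun k _ => ?_
    have : ∀ a : Fin (G k), V K N G g i (some ⟨k, a⟩) * w (some ⟨k, a⟩)
        = if g i k = a then w (some ⟨k, a⟩) else 0 := by
      intro a
      simp only [V, Option.elim]
      split <;> simp
    rw [Finset.sum_congr rfl (fun a _ => this a), Finset.sum_ite_eq]
    simp

lemma row_sum (i : Fin N) : ∑ c, V K N G g i c = (K : ℝ) + 1 := by
  have := rowval K N G g (fun _ => (1 : ℝ)) i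
  simpa [add_comm] using this

lemma Ubar_apply (c c' : Idx K G) :
    Ubar K N G g c c' = (Real.sqrt (U K N G g c c))⁻¹ * U K N G g c c'
      * (Real.sqrt (U K N G g c' c'))⁻¹ := by
  simp [Ubar, Matrix.mul_diagonal, Matrix.diagonal_mul]

end Aux

/-- Every eigenvalue of `Ū` lies in `[0, K+1]`, and `K+1` is an eigenvalue of `Ū`:
the vector `x` with `x[c] = √(U[c,c])` satisfies `Ū x = (K+1) x`.  In particular the
largest eigenvalue of `Ū` equals `K + 1`. -/
theorem Ubar_top_eigenvalue (K N : ℕ) (G : Fin K → ℕ)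
    (g : Fin N → ∀ k : Fin K, Fin (G k))
    (hK : 1 ≤ K) (hGk : ∀ k, 1 ≤ G k) (hN : 1 ≤ N)
    (hobs : ∀ (k : Fin K) (a : Fin (G k)), ∃ i, g i k = a) :
    (∀ μ : ℝ, Module.End.HasEigenvalue (Ubar K N G g).mulVecLin μ →
      0 ≤ μ ∧ μ ≤ (K : ℝ) + 1) ∧
    (Ubar K N G g).mulVec (fun c => Real.sqrt (U K N G g c c))
      = ((K : ℝ) + 1) • (fun c => Real.sqrt (U K N G g c c)) ∧
    Module.End.HasEigenvalue (Ubar K N G g).mulVecLin ((K : ℝ) + 1) := by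
  set s : Idx K G → ℝ := fun c => Real.sqrt (U K N G g c c) with hs
  have hsne : ∀ c, s c ≠ 0 := sqrt_ne_zero K N G g hN hobs
  have hss : ∀ c, s c * s c = U K N G g c c := sqrt_mul_self K N G g hN hobs
  -- the eigenvector identity
  have heig : (Ubar K N G g).mulVec s = ((K : ℝ) + 1) • s := by
    funext c
    have : (Ubar K N G g).mulVec s c
        = (s c)⁻¹ * ∑ c', U K N G g c c' := by
      simp only [Matrix.mulVec, dotProduct, Ubar_apply, Finset.mul_sum]
      refine Finset.sum_congr rfl fun c' _ => ?_
      rw [mul_assoc, mul_assoc]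
      congr 1
      rw [mul_comm ((s c')⁻¹) (s c'), mul_inv_cancel₀ (hsne c'), mul_one]
    rw [this]
    have hsum : ∑ c', U K N G g c c' = ((K : ℝ) + 1) * U K N G g c c := by
      have : ∑ c', U K N G g c c' = ∑ i, V K N G g i c * ((K : ℝ) + 1) := by
        simp only [U, Matrix.mul_apply, Matrix.transpose_apply]
        rw [Finset.sum_comm]
        refine Finset.sum_congr rfl fun i _ => ?_
        rw [← Finset.mul_sum, row_sum]
      rw [this, ← Finset.sum_mul, ← U_diag, mul_comm]
    rw [hsum, ← hss c, Pi.smul_apply, smul_eq_mul, inv_mul_eq_div,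
      div_eq_iff (hsne c)]
    ring
  refine ⟨?_, heig, ?_⟩
  · -- eigenvalue bounds
    intro μ hμ
    obtain ⟨x, hxmem, hxne⟩ := hμ.exists_hasEigenvector
    have hx : (Ubar K N G g).mulVec x = μ • x := by
      have := Module.End.mem_eigenspace_iff.mp hxmem
      simpa [Matrix.mulVecLin_apply] using this
    set y : Idx K G → ℝ := fun c => (s c)⁻¹ * x c with hy
    -- quadratic form identity
    have hquad : μ * (x ⬝ᵥ x) = (V K N G g *ᵥ y) ⬝ᵥ (V K N G g *ᵥ y) := by
      have h1 : x ⬝ᵥ ((Ubar K N G g).mulVec x) = μ * (x ⬝ᵥ x) := by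
        rw [hx, dotProduct_smul, smul_eq_mul]
      have hDx : (diagonal fun c => (s c)⁻¹) *ᵥ x = y := by
        funext c
        rw [Matrix.mulVec_diagonal]
      have h2 : x ⬝ᵥ ((Ubar K N G g).mulVec x) = y ⬝ᵥ ((U K N G g).mulVec y) := by
        rw [Ubar, ← Matrix.mulVec_mulVec, ← Matrix.mulVec_mulVec, hDx,
          Matrix.dotProduct_mulVec x (diagonal fun c => (s c)⁻¹)]
        refine congrArg (· ⬝ᵥ _) ?_
        funext c
        rw [Matrix.vecMul_diagonal, mul_comm]
      have h3 : y ⬝ᵥ ((U K N G g).mulVec y)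
          = (V K N G g *ᵥ y) ⬝ᵥ (V K N G g *ᵥ y) := by
        rw [U, ← Matrix.mulVec_mulVec, Matrix.dotProduct_mulVec, Matrix.vecMul_transpose]
      rw [← h1, h2, h3]
    have hdpnn : ∀ v : Idx K G → ℝ, (0:ℝ) ≤ v ⬝ᵥ v := fun v =>
      Finset.sum_nonneg fun i _ => mul_self_nonneg _
    have hxx : 0 < x ⬝ᵥ x := by
      rcases lt_or_eq_of_le (hdpnn x) with h | h
      · exact h
      · exact absurd (dotProduct_self_eq_zero.mp h.symm) hxne
    have hQnn : 0 ≤ (V K N G g *ᵥ y) ⬝ᵥ (V K N G g *ᵥ y) :=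
      Finset.sum_nonneg fun i _ => mul_self_nonneg _
    -- upper bound on quadratic form
    have hQle : (V K N G g *ᵥ y) ⬝ᵥ (V K N G g *ᵥ y) ≤ ((K : ℝ) + 1) * (x ⬝ᵥ x) := by
      have hrow : ∀ i, (V K N G g *ᵥ y) i * (V K N G g *ᵥ y) i
          ≤ ((K : ℝ) + 1) * ∑ c, V K N G g i c * (y c * y c) := by
        intro i
        have hv : (V K N G g *ᵥ y) i = ∑ j : Option (Fin K),
            j.elim (y none) (fun k => y (some ⟨k, g i k⟩)) := by
          rw [Matrix.mulVec, dotProduct, rowval, Fintype.sum_option]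
          simp
        have hv2 : ∑ c, V K N G g i c * (y c * y c) = ∑ j : Option (Fin K),
            (j.elim (y none) (fun k => y (some ⟨k, g i k⟩)))^2 := by
          rw [rowval K N G g (fun c => y c * y c) i, Fintype.sum_option]
          simp [sq]
        rw [hv, hv2, ← sq]
        have := sq_sum_le_card_mul_sum_sq
          (s := (Finset.univ : Finset (Option (Fin K))))
          (f := fun j => j.elim (y none) (fun k => y (some ⟨k, g i k⟩)))
        calc (∑ j : Option (Fin K),
              j.elim (y none) (fun k => y (some ⟨k, g i k⟩)))^2
            ≤ (Finset.univ.card : ℝ) * ∑ j : Option (Fin K),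
              (j.elim (y none) (fun k => y (some ⟨k, g i k⟩)))^2 := by
              exact_mod_cast this
          _ = ((K : ℝ) + 1) * ∑ j : Option (Fin K),
              (j.elim (y none) (fun k => y (some ⟨k, g i k⟩)))^2 := by
              norm_num
      calc (V K N G g *ᵥ y) ⬝ᵥ (V K N G g *ᵥ y)
          = ∑ i, (V K N G g *ᵥ y) i * (V K N G g *ᵥ y) i := rfl
        _ ≤ ∑ i, ((K : ℝ) + 1) * ∑ c, V K N G g i c * (y c * y c) :=
            Finset.sum_le_sum fun i _ => hrow i
        _ = ((K : ℝ) + 1) * ∑ c, (∑ i, V K N G g i c) * (y c * y c) := by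
            rw [← Finset.mul_sum, Finset.sum_comm]
            simp [Finset.sum_mul]
        _ = ((K : ℝ) + 1) * (x ⬝ᵥ x) := by
            congr 1
            refine Finset.sum_congr rfl fun c _ => ?_
            rw [← U_diag, ← hss c, hy]
            have hc := hsne c
            first
            | (field_simp; ring)
            | field_simp
    constructor
    · have h0 : 0 ≤ μ * (x ⬝ᵥ x) := hquad ▸ hQnn
      nlinarith
    · have h1 : μ * (x ⬝ᵥ x) ≤ ((K : ℝ) + 1) * (x ⬝ᵥ x) := hquad ▸ hQle
      exact le_of_mul_le_mul_right h1 hxx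
  · -- K+1 is an eigenvalue
    refine Module.End.hasEigenvalue_of_hasEigenvector (x := s) ⟨?_, ?_⟩
    · rw [Module.End.mem_eigenspace_iff, Matrix.mulVecLin_apply]
      exact heig
    · intro h
      have : s none = 0 := congrFun h none
      exact hsne none this

end Crossed
end

section
/- Under the random-intercept crossed effects design with K ≥ 2 factors, let ν̄_1 ≤ ⋯ ≤ ν̄_{p−1} be the eigenvalues (nondecreasing, with multiplicity) of Ā^(r). Then ν̄_1 = ⋯ = ν̄_{K−1} = −1/(K−1) and ν̄_{p−1} = 1. -/
/-!
Write `D = Diag(U^(r))` and `F = (D^(r))^{-1/2}`. Since `F D F = (K-1)⁻¹ • 1`, one gets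
`Ā^(r) + (K-1)⁻¹ • 1 = (V^(r) F)ᵀ (V^(r) F)` and `1 - Ā^(r) = F (K • D - U^(r)) F`. Both are
positive semidefinite, the second by Cauchy–Schwarz over the `K` factors of each observation, so
the spectrum lies in `[-1/(K-1), 1]`. The all-ones vector is in the kernel of `K • D - U^(r)`, so
`1` is an eigenvalue. Every row of `V^(r)` has exactly one `1` in each factor block, so the `K - 1`
differences of block indicators lie in the kernel of `V^(r)`; hence
`rank (Ā^(r) + (K-1)⁻¹ • 1) = rank (V^(r) F) ≤ p - 1 - (K - 1)`, and `-1/(K-1)` has multiplicity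
at least `K - 1`.
-/

open Matrix

namespace Crossed

/-- Coordinates of the random effects: `⟨k, a⟩` is level `a` of factor `k`. -/
abbrev Lvl (K : ℕ) (G : Fin K → ℕ) := Σ k : Fin K, Fin (G k)

/-- The restricted design matrix `V^(r)` (intercept column removed). -/
noncomputable def Vr (K N : ℕ) (G : Fin K → ℕ) (g : Fin N → ∀ k : Fin K, Fin (G k)) :
    Matrix (Fin N) (Lvl K G) ℝ :=
  fun i s => if g i s.1 = s.2 then 1 else 0

/-- `U^(r) = (V^(r))ᵀ V^(r)`. -/
noncomputable def Ur (K N : ℕ) (G : Fin K → ℕ) (g : Fin N → ∀ k : Fin K, Fin (G k)) :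
    Matrix (Lvl K G) (Lvl K G) ℝ :=
  (Vr K N G g)ᵀ * Vr K N G g

/-- `A^(r) = U^(r) − Diag(U^(r))`. -/
noncomputable def Ar (K N : ℕ) (G : Fin K → ℕ) (g : Fin N → ∀ k : Fin K, Fin (G k)) :
    Matrix (Lvl K G) (Lvl K G) ℝ :=
  Ur K N G g - diagonal (fun c => Ur K N G g c c)

/-- `Ā^(r) = (D^(r))^{−1/2} A^(r) (D^(r))^{−1/2}` with `D^(r) = (K−1)·Diag(U^(r))`. -/
noncomputable def Abar (K N : ℕ) (G : Fin K → ℕ) (g : Fin N → ∀ k : Fin K, Fin (G k)) :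
    Matrix (Lvl K G) (Lvl K G) ℝ :=
  diagonal (fun c => (Real.sqrt (((K : ℝ) - 1) * Ur K N G g c c))⁻¹) * Ar K N G g *
    diagonal (fun c => (Real.sqrt (((K : ℝ) - 1) * Ur K N G g c c))⁻¹)

end Crossed

namespace Matrix

variable {m n R : Type*} [Fintype n]

theorem rank_neg [CommRing R] (M : Matrix m n R) : (-M).rank = M.rank := by
  have : (-M).mulVecLin = -M.mulVecLin := by ext; simp
  rw [rank, this, LinearMap.range_neg, rank]

theorem rank_add_card_le_of_mulVec_eq_zero [Field R] [Fintype m] {ι : Type*} [Fintype ι]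
    (M : Matrix m n R) {v : ι → n → R} (hv : LinearIndependent R v) (hMv : ∀ i, M *ᵥ v i = 0) :
    M.rank + Fintype.card ι ≤ Fintype.card n := by
  have hrank : (of v)ᵀ.rank = Fintype.card ι := by
    rw [rank_transpose]; exact hv.rank_matrix
  rw [← hrank]
  refine rank_add_rank_le_card_of_mul_eq_zero ?_
  ext i j
  simpa [mul_apply, mulVec, dotProduct] using congrFun (hMv j) i

namespace IsHermitian

variable [DecidableEq n] {A : Matrix n n ℝ} (hA : A.IsHermitian)
include hA

theorem card_eigenvalues_eq_add_rank (μ : ℝ) :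
    Fintype.card {i // hA.eigenvalues i = μ} + (A - μ • 1).rank = Fintype.card n := by
  have hconj : A - μ • 1 = Unitary.conjStarAlgAut ℝ _ hA.eigenvectorUnitary
      (diagonal fun i => hA.eigenvalues i - μ) := by
    conv_lhs => rw [hA.spectral_theorem]
    rw [← map_one (Unitary.conjStarAlgAut ℝ _ hA.eigenvectorUnitary), ← map_smul, ← map_sub,
      ← diagonal_one, ← diagonal_smul, diagonal_sub]
    simp
  rw [hconj, Unitary.conjStarAlgAut_apply, ← Unitary.coe_star]
  simp [-isUnit_iff_ne_zero, -Unitary.coe_star, rank_diagonal, sub_eq_zero]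
  have := Fintype.card_subtype_le fun i => hA.eigenvalues i = μ
  omega

theorem dotProduct_eigenvectorBasis_self (i : n) :
    ⇑(hA.eigenvectorBasis i) ⬝ᵥ ⇑(hA.eigenvectorBasis i) = 1 := by
  rw [← star_trivial (⇑(hA.eigenvectorBasis i)), ← EuclideanSpace.inner_eq_star_dotProduct,
    star_trivial, WithLp.toLp_ofLp, real_inner_self_eq_norm_sq,
    hA.eigenvectorBasis.orthonormal.1 i, one_pow]

theorem sub_smul_one_mulVec_eigenvectorBasis (μ : ℝ) (i : n) :
    (A - μ • 1) *ᵥ hA.eigenvectorBasis i = (hA.eigenvalues i - μ) • ⇑(hA.eigenvectorBasis i) := by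
  rw [sub_mulVec, smul_mulVec, one_mulVec, mulVec_eigenvectorBasis, sub_smul]

theorem le_eigenvalues_of_posSemidef {μ : ℝ} (h : (A - μ • 1).PosSemidef) (i : n) :
    μ ≤ hA.eigenvalues i := by
  have := h.dotProduct_mulVec_nonneg (hA.eigenvectorBasis i)
  rwa [star_trivial, hA.sub_smul_one_mulVec_eigenvectorBasis, dotProduct_smul,
    hA.dotProduct_eigenvectorBasis_self, smul_eq_mul, mul_one, sub_nonneg] at this

theorem eigenvalues_le_of_posSemidef {μ : ℝ} (h : (μ • 1 - A).PosSemidef) (i : n) :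
    hA.eigenvalues i ≤ μ := by
  have := h.dotProduct_mulVec_nonneg (hA.eigenvectorBasis i)
  rwa [star_trivial, ← neg_sub, neg_mulVec, hA.sub_smul_one_mulVec_eigenvectorBasis,
    dotProduct_neg, dotProduct_smul, hA.dotProduct_eigenvectorBasis_self, smul_eq_mul, mul_one,
    neg_nonneg, sub_nonpos] at this

end IsHermitian

end Matrix

namespace Monotone

variable {α : Type*} [LinearOrder α] {n : ℕ} {ν : Fin n → α} (hν : Monotone ν)
include hν

theorem apply_eq_of_lt_card_of_forall_le {a : α} (ha : ∀ j, a ≤ ν j) {i : Fin n}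
    (hi : (i : ℕ) < Fintype.card {j // ν j = a}) : ν i = a := by
  by_contra hne
  have hlt : a < ν i := (ha i).lt_of_ne' hne
  have hsub : (Finset.univ.filter fun j => ν j = a) ⊆ Finset.Iio i := by
    intro j hj
    rw [Finset.mem_filter] at hj
    rw [Finset.mem_Iio]
    by_contra hij
    exact (hν (not_lt.mp hij)).not_gt (hj.2 ▸ hlt)
  have := Finset.card_le_card hsub
  rw [Fin.card_Iio, ← Fintype.card_subtype] at this
  omega

theorem apply_eq_of_forall_ge_of_exists {b : α} (hb : ∀ j, ν j ≤ b) (hex : ∃ j, ν j = b)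
    {i : Fin n} (hi : (i : ℕ) = n - 1) : ν i = b := by
  obtain ⟨j, rfl⟩ := hex
  exact le_antisymm (hb i) (hν (Fin.le_def.mpr (by omega)))

end Monotone

namespace Crossed

section Design

variable {K N : ℕ} {G : Fin K → ℕ} (g : Fin N → ∀ k : Fin K, Fin (G k))

theorem Vr_mulVec (x : Lvl K G → ℝ) (i : Fin N) :
    (Vr K N G g *ᵥ x) i = ∑ k, x ⟨k, g i k⟩ := by
  rw [mulVec, dotProduct, ← Finset.univ_sigma_univ, Finset.sum_sigma]
  simp [Vr]

theorem Vr_mulVec_one : Vr K N G g *ᵥ 1 = (K : ℝ) • 1 := by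
  ext i; simp [Vr_mulVec]

theorem transpose_Vr_mulVec_one : (Vr K N G g)ᵀ *ᵥ 1 = fun c => Ur K N G g c c := by
  ext c
  simp only [Ur, Vr, mulVec, dotProduct, mul_apply, transpose_apply, Pi.one_apply, mul_one]
  exact Finset.sum_congr rfl fun i _ => by split_ifs <;> simp

theorem one_le_Ur_apply_self (hobs : ∀ (k : Fin K) (a : Fin (G k)), ∃ i, g i k = a)
    (c : Lvl K G) : 1 ≤ Ur K N G g c c := by
  obtain ⟨i, hi⟩ := hobs c.1 c.2
  calc (1 : ℝ) = Vr K N G g i c := by simp [Vr, hi]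
    _ ≤ ∑ j, Vr K N G g j c :=
      Finset.single_le_sum (f := fun j => Vr K N G g j c)
        (fun j _ => by unfold Vr; positivity) (Finset.mem_univ i)
    _ = Ur K N G g c c := by
      rw [← congrFun (transpose_Vr_mulVec_one g) c]
      simp [mulVec, dotProduct]

theorem posSemidef_smul_diagonal_sub_Ur :
    ((K : ℝ) • diagonal (fun c => Ur K N G g c c) - Ur K N G g).PosSemidef := by
  refine PosSemidef.of_dotProduct_mulVec_nonneg ?_ fun x => ?_
  · simp [IsHermitian, Ur, transpose_sub, transpose_smul]
  have hdiag : x ⬝ᵥ (diagonal (fun c => Ur K N G g c c) *ᵥ x)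
      = ∑ i, ∑ k, x ⟨k, g i k⟩ ^ 2 := by
    have hd : x ⬝ᵥ (diagonal (fun c => Ur K N G g c c) *ᵥ x)
        = ((Vr K N G g)ᵀ *ᵥ 1) ⬝ᵥ (x * x) := by
      simp only [transpose_Vr_mulVec_one, mulVec_diagonal, dotProduct, Pi.mul_apply]
      exact Finset.sum_congr rfl fun c _ => by ring
    rw [hd, mulVec_transpose, ← dotProduct_mulVec]
    simp [dotProduct, Vr_mulVec, sq]
  have hUr : x ⬝ᵥ (Ur K N G g *ᵥ x) = ∑ i, (∑ k, x ⟨k, g i k⟩) ^ 2 := by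
    rw [Ur, ← mulVec_mulVec, dotProduct_mulVec, vecMul_transpose, dotProduct]
    simp only [Vr_mulVec, sq]
  rw [star_trivial, sub_mulVec, dotProduct_sub, smul_mulVec, dotProduct_smul, hdiag, hUr,
    smul_eq_mul, Finset.mul_sum, ← Finset.sum_sub_distrib]
  refine Finset.sum_nonneg fun i _ => sub_nonneg.mpr ?_
  simpa using sq_sum_le_card_mul_sum_sq (s := Finset.univ) (f := fun k => x ⟨k, g i k⟩)

theorem smul_diagonal_sub_Ur_mulVec_one :
    ((K : ℝ) • diagonal (fun c => Ur K N G g c c) - Ur K N G g) *ᵥ 1 = 0 := by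
  have hUr : Ur K N G g *ᵥ 1 = (K : ℝ) • fun c => Ur K N G g c c := by
    conv_lhs => rw [Ur, ← mulVec_mulVec, Vr_mulVec_one, mulVec_smul, transpose_Vr_mulVec_one]
  ext c
  simp [sub_mulVec, smul_mulVec, mulVec_diagonal, hUr]

theorem rank_Vr_add_le (hGk : ∀ k, 1 ≤ G k) (k₀ : Fin K) :
    (Vr K N G g).rank + (K - 1) ≤ Fintype.card (Lvl K G) := by
  let v : {k // k ≠ k₀} → Lvl K G → ℝ := fun k c =>
    (if c.1 = k.1 then 1 else 0) - (if c.1 = k₀ then 1 else 0)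
  have hker : ∀ k, Vr K N G g *ᵥ v k = 0 := by
    intro k; ext i; simp [v, Vr_mulVec, Finset.sum_sub_distrib]
  have hv : LinearIndependent ℝ v := by
    refine Fintype.linearIndependent_iff.mpr fun a ha k => ?_
    have := congrFun ha ⟨k.1, ⟨0, hGk k.1⟩⟩
    simpa [v, k.2, Finset.sum_apply, ← Subtype.ext_iff] using this
  simpa [Fintype.card_subtype_compl] using rank_add_card_le_of_mulVec_eq_zero _ hv hker

end Design

noncomputable def DrInvSqrt (K N : ℕ) (G : Fin K → ℕ) (g : Fin N → ∀ k : Fin K, Fin (G k)) :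
    Matrix (Lvl K G) (Lvl K G) ℝ :=
  diagonal (fun c => (Real.sqrt (((K : ℝ) - 1) * Ur K N G g c c))⁻¹)

section Scaling

variable {K N : ℕ} {G : Fin K → ℕ} {g : Fin N → ∀ k : Fin K, Fin (G k)}

theorem Abar_eq : Abar K N G g = DrInvSqrt K N G g * Ar K N G g * DrInvSqrt K N G g := rfl

theorem conjTranspose_DrInvSqrt : (DrInvSqrt K N G g)ᴴ = DrInvSqrt K N G g := by
  simp [DrInvSqrt]

variable (hK : 1 < K) (hobs : ∀ (k : Fin K) (a : Fin (G k)), ∃ i, g i k = a)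
include hK hobs

theorem DrInvSqrt_mul_diagonal_mul_DrInvSqrt :
    DrInvSqrt K N G g * diagonal (fun c => Ur K N G g c c) * DrInvSqrt K N G g
      = ((K : ℝ) - 1)⁻¹ • 1 := by
  rw [DrInvSqrt, diagonal_mul_diagonal, diagonal_mul_diagonal, ← diagonal_one, ← diagonal_smul]
  congr 1
  ext c
  have hd := one_le_Ur_apply_self g hobs c
  have hK' : (1 : ℝ) < K := by exact_mod_cast hK
  rw [mul_right_comm, ← mul_inv, Real.mul_self_sqrt (by nlinarith)]
  field_simp
  simp

theorem DrInvSqrt_mul_Ur_mul_DrInvSqrt :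
    DrInvSqrt K N G g * Ur K N G g * DrInvSqrt K N G g = Abar K N G g + ((K : ℝ) - 1)⁻¹ • 1 := by
  rw [Abar_eq, Ar, mul_sub, sub_mul, DrInvSqrt_mul_diagonal_mul_DrInvSqrt hK hobs, sub_add_cancel]

theorem Abar_add_smul_one :
    Abar K N G g + ((K : ℝ) - 1)⁻¹ • 1
      = (Vr K N G g * DrInvSqrt K N G g)ᴴ * (Vr K N G g * DrInvSqrt K N G g) := by
  rw [← DrInvSqrt_mul_Ur_mul_DrInvSqrt hK hobs, conjTranspose_mul, conjTranspose_DrInvSqrt, Ur,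
    conjTranspose_eq_transpose_of_trivial]
  simp only [Matrix.mul_assoc]

theorem one_sub_Abar :
    1 - Abar K N G g = DrInvSqrt K N G g *
      ((K : ℝ) • diagonal (fun c => Ur K N G g c c) - Ur K N G g) * DrInvSqrt K N G g := by
  have hK' : (K : ℝ) - 1 ≠ 0 := sub_ne_zero.mpr (by exact_mod_cast hK.ne')
  rw [mul_sub, sub_mul, Matrix.mul_smul, Matrix.smul_mul,
    DrInvSqrt_mul_diagonal_mul_DrInvSqrt hK hobs, DrInvSqrt_mul_Ur_mul_DrInvSqrt hK hobs, smul_smul,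
    show (K : ℝ) * ((K : ℝ) - 1)⁻¹ = 1 + ((K : ℝ) - 1)⁻¹ by field_simp; ring, add_smul, one_smul]
  abel

end Scaling

section Spectrum

variable {K N : ℕ} {G : Fin K → ℕ} {g : Fin N → ∀ k : Fin K, Fin (G k)}
  (hK : 1 < K) (hobs : ∀ (k : Fin K) (a : Fin (G k)), ∃ i, g i k = a)
  (hA : (Abar K N G g).IsHermitian)
include hK hobs

theorem neg_inv_le_eigenvalues_Abar (c : Lvl K G) : -((K : ℝ) - 1)⁻¹ ≤ hA.eigenvalues c := by
  refine hA.le_eigenvalues_of_posSemidef ?_ c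
  rw [neg_smul, sub_neg_eq_add, Abar_add_smul_one hK hobs]
  exact posSemidef_conjTranspose_mul_self _

theorem eigenvalues_Abar_le_one (c : Lvl K G) : hA.eigenvalues c ≤ 1 := by
  refine hA.eigenvalues_le_of_posSemidef ?_ c
  rw [one_smul, one_sub_Abar hK hobs]
  have := (posSemidef_smul_diagonal_sub_Ur g).conjTranspose_mul_mul_same (DrInvSqrt K N G g)
  rwa [conjTranspose_DrInvSqrt] at this

theorem exists_eigenvalues_Abar_eq_one (hGk : ∀ k, 1 ≤ G k) :
    ∃ c, hA.eigenvalues c = 1 := by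
  have : Nonempty (Lvl K G) := ⟨⟨⟨0, by omega⟩, ⟨0, hGk _⟩⟩⟩
  have hrank : (Abar K N G g - (1 : ℝ) • 1).rank + 1 ≤ Fintype.card (Lvl K G) := by
    rw [← neg_sub, rank_neg, one_smul, one_sub_Abar hK hobs]
    have hv : LinearIndependent ℝ fun _ : Unit => (1 : Lvl K G → ℝ) :=
      linearIndependent_unique_iff.mpr one_ne_zero
    have := rank_add_card_le_of_mulVec_eq_zero _ hv fun _ => smul_diagonal_sub_Ur_mulVec_one g
    grw [rank_mul_le_left, rank_mul_le_right]
    simpa using this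
  have := hA.card_eigenvalues_eq_add_rank 1
  obtain ⟨c, hc⟩ : Nonempty {c // hA.eigenvalues c = 1} := Fintype.card_pos_iff.mp (by omega)
  exact ⟨c, hc⟩

theorem le_card_eigenvalues_Abar_eq_neg_inv (hGk : ∀ k, 1 ≤ G k) :
    K - 1 ≤ Fintype.card {c // hA.eigenvalues c = -((K : ℝ) - 1)⁻¹} := by
  have hrank : (Abar K N G g - (-((K : ℝ) - 1)⁻¹) • 1).rank + (K - 1)
      ≤ Fintype.card (Lvl K G) := by
    rw [neg_smul, sub_neg_eq_add, Abar_add_smul_one hK hobs, rank_conjTranspose_mul_self]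
    grw [rank_mul_le_left]
    exact rank_Vr_add_le g hGk ⟨0, by omega⟩
  have := hA.card_eigenvalues_eq_add_rank (-((K : ℝ) - 1)⁻¹)
  omega

end Spectrum

theorem Abar_extreme_eigenvalues_general (K N : ℕ) (G : Fin K → ℕ)
    (g : Fin N → ∀ k : Fin K, Fin (G k))
    (hK : 2 ≤ K) (hGk : ∀ k, 1 ≤ G k)
    (hobs : ∀ (k : Fin K) (a : Fin (G k)), ∃ i, g i k = a)
    (hA : (Abar K N G g).IsHermitian)
    (ν : Fin (Fintype.card (Lvl K G)) → ℝ) (hmono : Monotone ν)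
    (e : Lvl K G ≃ Fin (Fintype.card (Lvl K G)))
    (hν : ∀ c, hA.eigenvalues c = ν (e c)) :
    (∀ i : Fin (Fintype.card (Lvl K G)), (i : ℕ) < K - 1 →
      ν i = -1 / ((K : ℝ) - 1)) ∧
    (∀ i : Fin (Fintype.card (Lvl K G)), (i : ℕ) = Fintype.card (Lvl K G) - 1 →
      ν i = 1) := by
  have hνe : ∀ j, ν j = hA.eigenvalues (e.symm j) := fun j => by rw [hν, e.apply_symm_apply]
  refine ⟨fun i hi => ?_, fun i hi => ?_⟩
  · have hcard : K - 1 ≤ Fintype.card {j // ν j = -((K : ℝ) - 1)⁻¹} :=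
      (le_card_eigenvalues_Abar_eq_neg_inv hK hobs hA hGk).trans_eq
        (Fintype.card_congr (e.subtypeEquiv fun c => by rw [hν]))
    rw [neg_div, one_div]
    exact hmono.apply_eq_of_lt_card_of_forall_le
      (fun j => hνe j ▸ neg_inv_le_eigenvalues_Abar hK hobs hA _) (hi.trans_le hcard)
  · obtain ⟨c, hc⟩ := exists_eigenvalues_Abar_eq_one hK hobs hA hGk
    exact hmono.apply_eq_of_forall_ge_of_exists
      (fun j => hνe j ▸ eigenvalues_Abar_le_one hK hobs hA _) ⟨e c, hν c ▸ hc⟩ hi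

/-- Corollary 2 of the paper: the sorted eigenvalues `ν̄₁ ≤ ⋯ ≤ ν̄_{p−1}` of `Ā^(r)`
satisfy `ν̄₁ = ⋯ = ν̄_{K−1} = −1/(K−1)` and `ν̄_{p−1} = 1`. -/
theorem Abar_extreme_eigenvalues (K N : ℕ) (G : Fin K → ℕ)
    (g : Fin N → ∀ k : Fin K, Fin (G k))
    (hK : 2 ≤ K) (hGk : ∀ k, 1 ≤ G k) (hN : 1 ≤ N)
    (hobs : ∀ (k : Fin K) (a : Fin (G k)), ∃ i, g i k = a)
    (hA : (Abar K N G g).IsHermitian)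
    (ν : Fin (Fintype.card (Lvl K G)) → ℝ) (hmono : Monotone ν)
    (e : Lvl K G ≃ Fin (Fintype.card (Lvl K G)))
    (hν : ∀ c, hA.eigenvalues c = ν (e c)) :
    (∀ i : Fin (Fintype.card (Lvl K G)), (i : ℕ) < K - 1 →
      ν i = -1 / ((K : ℝ) - 1)) ∧
    (∀ i : Fin (Fintype.card (Lvl K G)), (i : ℕ) = Fintype.card (Lvl K G) - 1 →
      ν i = 1) :=
  Abar_extreme_eigenvalues_general K N G g hK hGk hobs hA ν hmono e hν

end Crossed
end

section
/- Under the random-intercept crossed effects design with exactly K = 2 factors and p − 1 = G_1 + G_2 ≥ 3, with T, τ, Q, Q̄, μ̄_1 ≤ ⋯ ≤ μ̄_p and ν̄_1 ≤ ⋯ ≤ ν̄_{p−1} as above, one has μ̄_{p−2} · (1 − ν̄_{p−2}) ≤ μ̄_3 · (1 + ν̄_{p−2}); i.e., κ_{3,p−2}(Q̄) ≤ (1 + ν̄_{p−2})/(1 − ν̄_{p−2}) whenever ν̄_{p−2} < 1. -/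
/-! On vectors whose intercept coordinate vanishes, `Q̄` acts as `I + E Ā E` for a diagonal
`0 ≤ E ≤ I`. With two factors, `Ā` is the normalised adjacency matrix of a bipartite graph:
flipping the sign of one factor's coordinates turns `Ā` into `-Ā`, and `Ā + I` is positive
semidefinite, so all `ν̄ ≤ 1`; vectors supported on a factor with at least two levels give
`ν̄_{p−2} ≥ 0`. Courant–Fischer on the codimension-two space of vectors with zero intercept
coordinate whose `E`-image (resp. sign-flipped `E`-image) is orthogonal to the top eigenvector
of `Ā` yields `μ̄_{p−2} ≤ 1 + ν̄_{p−2}` and `1 − ν̄_{p−2} ≤ μ̄₃`; multiply. -/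

open Matrix

namespace Crossed2

/-- Coordinates for `K = 2` factors: `none` is the intercept `θ₀`, `some ⟨k, a⟩` is
level `a` of factor `k ∈ {1, 2}`. -/
abbrev Idx (G : Fin 2 → ℕ) := Option (Σ k : Fin 2, Fin (G k))

/-- Coordinates of the random effects only. -/
abbrev Lvl (G : Fin 2 → ℕ) := Σ k : Fin 2, Fin (G k)

/-- The design matrix `V ∈ ℝ^{N×p}`. -/
noncomputable def V (N : ℕ) (G : Fin 2 → ℕ) (g : Fin N → ∀ k : Fin 2, Fin (G k)) :
    Matrix (Fin N) (Idx G) ℝ :=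
  fun i c => c.elim 1 (fun s => if g i s.1 = s.2 then 1 else 0)

/-- `U = Vᵀ V`. -/
noncomputable def U (N : ℕ) (G : Fin 2 → ℕ) (g : Fin N → ∀ k : Fin 2, Fin (G k)) :
    Matrix (Idx G) (Idx G) ℝ :=
  (V N G g)ᵀ * V N G g

/-- The posterior precision matrix `Q = T + τ U` (`T` diagonal). -/
noncomputable def Q (N : ℕ) (G : Fin 2 → ℕ) (g : Fin N → ∀ k : Fin 2, Fin (G k))
    (T0 : ℝ) (Tv : Fin 2 → ℝ) (τ : ℝ) : Matrix (Idx G) (Idx G) ℝ :=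
  diagonal (fun c => c.elim T0 (fun s => Tv s.1)) + τ • U N G g

/-- The Jacobi preconditioned matrix `Q̄ = Diag(Q)^{−1/2} Q Diag(Q)^{−1/2}`. -/
noncomputable def Qbar (N : ℕ) (G : Fin 2 → ℕ) (g : Fin N → ∀ k : Fin 2, Fin (G k))
    (T0 : ℝ) (Tv : Fin 2 → ℝ) (τ : ℝ) : Matrix (Idx G) (Idx G) ℝ :=
  diagonal (fun c => (Real.sqrt (Q N G g T0 Tv τ c c))⁻¹) * Q N G g T0 Tv τ *
    diagonal (fun c => (Real.sqrt (Q N G g T0 Tv τ c c))⁻¹)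

/-- The restricted design matrix `V^(r)`. -/
noncomputable def Vr (N : ℕ) (G : Fin 2 → ℕ) (g : Fin N → ∀ k : Fin 2, Fin (G k)) :
    Matrix (Fin N) (Lvl G) ℝ :=
  fun i s => if g i s.1 = s.2 then 1 else 0

/-- `U^(r) = (V^(r))ᵀ V^(r)`. -/
noncomputable def Ur (N : ℕ) (G : Fin 2 → ℕ) (g : Fin N → ∀ k : Fin 2, Fin (G k)) :
    Matrix (Lvl G) (Lvl G) ℝ :=
  (Vr N G g)ᵀ * Vr N G g

/-- `A^(r) = U^(r) − Diag(U^(r))`. -/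
noncomputable def Ar (N : ℕ) (G : Fin 2 → ℕ) (g : Fin N → ∀ k : Fin 2, Fin (G k)) :
    Matrix (Lvl G) (Lvl G) ℝ :=
  Ur N G g - diagonal (fun c => Ur N G g c c)

/-- `Ā^(r) = (D^(r))^{−1/2} A^(r) (D^(r))^{−1/2}` with `D^(r) = (K−1)·Diag(U^(r))
= Diag(U^(r))` since `K = 2`. -/
noncomputable def Abar (N : ℕ) (G : Fin 2 → ℕ) (g : Fin N → ∀ k : Fin 2, Fin (G k)) :
    Matrix (Lvl G) (Lvl G) ℝ :=
  diagonal (fun c => (Real.sqrt (Ur N G g c c))⁻¹) * Ar N G g *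
    diagonal (fun c => (Real.sqrt (Ur N G g c c))⁻¹)

end Crossed2

section
variable {n : Type*} [Fintype n]

lemma dotProduct_self_pos {x : n → ℝ} (hx : x ≠ 0) : 0 < x ⬝ᵥ x :=
  (Finset.sum_nonneg fun i _ => mul_self_nonneg (x i)).lt_of_ne'
    (dotProduct_self_eq_zero.not.mpr hx)

lemma exists_ne_zero_forall_dotProduct_eq_zero {K ι : Type*} [Field K] [Fintype ι]
    (w : ι → n → K) (h : Fintype.card ι < Fintype.card n) :
    ∃ x ≠ 0, ∀ i, w i ⬝ᵥ x = 0 := by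
  obtain ⟨x, hx, hx0⟩ := Submodule.exists_mem_ne_zero_of_ne_bot
    (LinearMap.ker_ne_bot_of_finrank_lt (f := (Matrix.of w).mulVecLin) (by simpa using h))
  exact ⟨x, hx0, fun i => congrFun (LinearMap.mem_ker.mp hx) i⟩

variable [DecidableEq n]

lemma diagonal_mulVec_dotProduct {R : Type*} [CommSemiring R] (d u v : n → R) :
    (diagonal d *ᵥ u) ⬝ᵥ v = u ⬝ᵥ (diagonal d *ᵥ v) := by
  simp only [dotProduct, mulVec_diagonal]
  exact Finset.sum_congr rfl fun i _ => by ring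

lemma diagonal_mulVec_dotProduct_mulVec {R : Type*} [CommSemiring R] (d : n → R)
    (A : Matrix n n R) (x : n → R) :
    (diagonal d *ᵥ x) ⬝ᵥ A *ᵥ (diagonal d *ᵥ x) = x ⬝ᵥ (diagonal d * A * diagonal d) *ᵥ x := by
  rw [diagonal_mulVec_dotProduct]
  simp only [mulVec_mulVec, Matrix.mul_assoc]

namespace Matrix.IsHermitian
variable {M : Matrix n n ℝ} (hM : M.IsHermitian)

lemma dotProduct_conj_diagonal_mulVec_eq_sum (d : n → ℝ) (x : n → ℝ) :
    x ⬝ᵥ ((hM.eigenvectorUnitary : Matrix n n ℝ) * diagonal d *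
      star (hM.eigenvectorUnitary : Matrix n n ℝ)) *ᵥ x =
      ∑ c, d c * (⇑(hM.eigenvectorBasis c) ⬝ᵥ x) ^ 2 := by
  set U : Matrix n n ℝ := ↑hM.eigenvectorUnitary
  have hcoef : star U *ᵥ x = fun c => ⇑(hM.eigenvectorBasis c) ⬝ᵥ x := by
    ext c; simp [U, mulVec, dotProduct, star_apply]
  have hvec : x ᵥ* U = star U *ᵥ x := by
    rw [star_eq_conjTranspose, conjTranspose_eq_transpose_of_trivial, mulVec_transpose]
  rw [← mulVec_mulVec, ← mulVec_mulVec, dotProduct_mulVec, hvec, hcoef]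
  simp [dotProduct, mulVec_diagonal, sq, mul_left_comm]

lemma dotProduct_mulVec_eq_sum (x : n → ℝ) :
    x ⬝ᵥ M *ᵥ x = ∑ c, hM.eigenvalues c * (⇑(hM.eigenvectorBasis c) ⬝ᵥ x) ^ 2 := by
  conv_lhs => rw [hM.spectral_theorem]
  exact hM.dotProduct_conj_diagonal_mulVec_eq_sum _ x

lemma dotProduct_self_eq_sum (x : n → ℝ) :
    x ⬝ᵥ x = ∑ c, (⇑(hM.eigenvectorBasis c) ⬝ᵥ x) ^ 2 := by
  simpa [Unitary.coe_mul_star_self] using hM.dotProduct_conj_diagonal_mulVec_eq_sum 1 x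

lemma dotProduct_mulVec_le_of_forall {r : ℝ} {x : n → ℝ}
    (hx : ∀ c, r < hM.eigenvalues c → ⇑(hM.eigenvectorBasis c) ⬝ᵥ x = 0) :
    x ⬝ᵥ M *ᵥ x ≤ r * (x ⬝ᵥ x) := by
  rw [hM.dotProduct_mulVec_eq_sum, hM.dotProduct_self_eq_sum, Finset.mul_sum]
  refine Finset.sum_le_sum fun c _ => ?_
  rcases lt_or_ge r (hM.eigenvalues c) with hc | hc
  · simp [hx c hc]
  · exact mul_le_mul_of_nonneg_right hc (sq_nonneg _)

lemma le_dotProduct_mulVec_of_forall {r : ℝ} {x : n → ℝ}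
    (hx : ∀ c, hM.eigenvalues c < r → ⇑(hM.eigenvectorBasis c) ⬝ᵥ x = 0) :
    r * (x ⬝ᵥ x) ≤ x ⬝ᵥ M *ᵥ x := by
  rw [hM.dotProduct_mulVec_eq_sum, hM.dotProduct_self_eq_sum, Finset.mul_sum]
  refine Finset.sum_le_sum fun c _ => ?_
  rcases lt_or_ge (hM.eigenvalues c) r with hc | hc
  · simp [hx c hc]
  · exact mul_le_mul_of_nonneg_right hc (sq_nonneg _)

variable {μ : Fin (Fintype.card n) → ℝ} (hμmono : Monotone μ) {e : n ≃ Fin (Fintype.card n)}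
  (hμ : ∀ c, hM.eigenvalues c = μ (e c))
include hμmono hμ

lemma dotProduct_mulVec_le_of_orthogonal (k : Fin (Fintype.card n)) {x : n → ℝ}
    (hx : ∀ c, k < e c → ⇑(hM.eigenvectorBasis c) ⬝ᵥ x = 0) :
    x ⬝ᵥ M *ᵥ x ≤ μ k * (x ⬝ᵥ x) :=
  hM.dotProduct_mulVec_le_of_forall fun c hc =>
    hx c (hμmono.reflect_lt (hμ c ▸ hc))

-- The two halves of the Courant–Fischer min-max principle, with the test subspace given by
-- orthogonality conditions.
lemma eigenvalue_le_of_forall_orthogonal {ι : Type*} [Fintype ι] (w : ι → n → ℝ)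
    (k : Fin (Fintype.card n)) (hk : Fintype.card ι + k < Fintype.card n) {r : ℝ}
    (h : ∀ x, (∀ i, w i ⬝ᵥ x = 0) → x ⬝ᵥ M *ᵥ x ≤ r * (x ⬝ᵥ x)) :
    μ k ≤ r := by
  have hlow : Fintype.card {c // e c < k} ≤ k := by
    simpa using Fintype.card_le_of_injective (fun c : {c // e c < k} => (⟨e c, c.2⟩ : Fin k))
      fun c d hcd => Subtype.ext (e.injective (Fin.ext (Fin.mk.inj_iff.mp hcd)))
  obtain ⟨x, hx0, hx⟩ := exists_ne_zero_forall_dotProduct_eq_zero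
    (Sum.elim w fun c : {c // e c < k} => ⇑(hM.eigenvectorBasis c))
    (by rw [Fintype.card_sum]; omega)
  have hbelow : μ k * (x ⬝ᵥ x) ≤ x ⬝ᵥ M *ᵥ x :=
    hM.le_dotProduct_mulVec_of_forall fun c hc =>
      hx (Sum.inr ⟨c, hμmono.reflect_lt (hμ c ▸ hc)⟩)
  exact le_of_mul_le_mul_right (hbelow.trans (h x fun i => hx (Sum.inl i)))
    (dotProduct_self_pos hx0)

lemma le_eigenvalue_of_forall_orthogonal {ι : Type*} [Fintype ι] (w : ι → n → ℝ)
    (k : Fin (Fintype.card n)) (hk : Fintype.card ι ≤ k) {r : ℝ}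
    (h : ∀ x, (∀ i, w i ⬝ᵥ x = 0) → r * (x ⬝ᵥ x) ≤ x ⬝ᵥ M *ᵥ x) :
    r ≤ μ k := by
  have hhigh : Fintype.card {c // k < e c} = Fintype.card n - 1 - k := by
    rw [Fintype.card_congr (e.subtypeEquiv fun _ => Iff.rfl), Fintype.card_subtype,
      Finset.filter_lt_eq_Ioi, Fin.card_Ioi]
  obtain ⟨x, hx0, hx⟩ := exists_ne_zero_forall_dotProduct_eq_zero
    (Sum.elim w fun c : {c // k < e c} => ⇑(hM.eigenvectorBasis c))
    (by rw [Fintype.card_sum]; omega)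
  have habove : x ⬝ᵥ M *ᵥ x ≤ μ k * (x ⬝ᵥ x) :=
    hM.dotProduct_mulVec_le_of_orthogonal hμmono hμ k fun c hc => hx (Sum.inr ⟨c, hc⟩)
  exact le_of_mul_le_mul_right ((h x fun i => hx (Sum.inl i)).trans habove)
    (dotProduct_self_pos hx0)

lemma exists_forall_orthogonal_dotProduct_mulVec_le (k : Fin (Fintype.card n))
    (hk : (k : ℕ) + 2 = Fintype.card n) :
    ∃ c, ∀ x, ⇑(hM.eigenvectorBasis c) ⬝ᵥ x = 0 → x ⬝ᵥ M *ᵥ x ≤ μ k * (x ⬝ᵥ x) := by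
  refine ⟨e.symm ⟨k + 1, by omega⟩, fun x hx => ?_⟩
  refine hM.dotProduct_mulVec_le_of_orthogonal hμmono hμ k fun c hc => ?_
  have hc_top : c = e.symm ⟨k + 1, by omega⟩ :=
    e.eq_symm_apply.mpr <| Fin.ext <| show (e c : ℕ) = k + 1 by
      have := (e c).isLt; have := Fin.lt_def.mp hc; omega
  rwa [hc_top]

end Matrix.IsHermitian
end

section
variable {α R : Type*} [Fintype α] [CommSemiring R]

lemma dotProduct_eq_of_none_eq_zero {x : Option α → R} (hx : x none = 0) (y : Option α → R) :
    x ⬝ᵥ y = (x ∘ some) ⬝ᵥ (y ∘ some) := by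
  simp [dotProduct, Fintype.sum_option, hx]

lemma mulVec_comp_some_of_none_eq_zero (M : Matrix (Option α) (Option α) R) {x : Option α → R}
    (hx : x none = 0) : (M *ᵥ x) ∘ some = M.submatrix some some *ᵥ (x ∘ some) := by
  ext s
  rw [Function.comp_apply, mulVec, dotProduct_comm, dotProduct_eq_of_none_eq_zero hx,
    dotProduct_comm]
  rfl

lemma elim'_zero_dotProduct (u : α → R) (x : Option α → R) :
    Option.elim' 0 u ⬝ᵥ x = u ⬝ᵥ (x ∘ some) := by
  simp [dotProduct, Fintype.sum_option]
end

namespace Crossed2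

section Design
variable {N : ℕ} {G : Fin 2 → ℕ} {g : Fin N → ∀ k : Fin 2, Fin (G k)}

lemma Ur_apply (s t : Lvl G) :
    Ur N G g s t =
      ∑ i, (if g i s.1 = s.2 then (1 : ℝ) else 0) * (if g i t.1 = t.2 then 1 else 0) := by
  simp [Ur, Vr, mul_apply]

lemma Ur_posSemidef : (Ur N G g).PosSemidef := by
  simpa [Ur, conjTranspose_eq_transpose_of_trivial] using
    posSemidef_conjTranspose_mul_self (Vr N G g)

lemma Ur_self_pos (hobs : ∀ (k : Fin 2) (a : Fin (G k)), ∃ i, g i k = a) (s : Lvl G) :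
    0 < Ur N G g s s := by
  obtain ⟨i, hi⟩ := hobs s.1 s.2
  rw [Ur_apply]
  exact Finset.sum_pos' (fun _ _ => by positivity) ⟨i, Finset.mem_univ i, by simp [hi]⟩

lemma Ur_eq_zero_of_fst_eq {s t : Lvl G} (h : s.1 = t.1) (hst : s ≠ t) : Ur N G g s t = 0 := by
  obtain ⟨k, a⟩ := s
  obtain ⟨k, b⟩ := t
  obtain rfl : _ = k := h
  have hab : a ≠ b := fun hab => hst (hab ▸ rfl)
  rw [Ur_apply]
  refine Finset.sum_eq_zero fun i _ => ?_
  by_cases hia : g i _ = a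
  · simp [hia, hab]
  · simp [hia]

lemma Abar_apply (s t : Lvl G) :
    Abar N G g s t = (Real.sqrt (Ur N G g s s))⁻¹ *
      (Ur N G g s t - if s = t then Ur N G g s s else 0) * (Real.sqrt (Ur N G g t t))⁻¹ := by
  simp [Abar, Ar, mul_apply, diagonal_apply]

lemma Abar_eq_zero_of_fst_eq {s t : Lvl G} (h : s.1 = t.1) : Abar N G g s t = 0 := by
  rw [Abar_apply]
  rcases eq_or_ne s t with rfl | hst
  · simp
  · simp [Ur_eq_zero_of_fst_eq h hst, hst]

lemma Abar_add_one (hobs : ∀ (k : Fin 2) (a : Fin (G k)), ∃ i, g i k = a) :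
    Abar N G g + 1 = diagonal (fun s => (Real.sqrt (Ur N G g s s))⁻¹) * Ur N G g *
      diagonal (fun s => (Real.sqrt (Ur N G g s s))⁻¹) := by
  have hdiag : diagonal (fun s => (Real.sqrt (Ur N G g s s))⁻¹) *
      diagonal (fun s => Ur N G g s s) * diagonal (fun s => (Real.sqrt (Ur N G g s s))⁻¹) = 1 := by
    rw [diagonal_mul_diagonal, diagonal_mul_diagonal, ← diagonal_one]
    congr 1
    ext s
    have hsq := Real.mul_self_sqrt (Ur_self_pos hobs s).le
    have hpos := Real.sqrt_pos.mpr (Ur_self_pos hobs s)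
    field_simp
    linarith
  rw [Abar, Ar, Matrix.mul_sub, Matrix.sub_mul, hdiag, sub_add_cancel]

lemma neg_dotProduct_self_le_dotProduct_Abar_mulVec
    (hobs : ∀ (k : Fin 2) (a : Fin (G k)), ∃ i, g i k = a) (x : Lvl G → ℝ) :
    -(x ⬝ᵥ x) ≤ x ⬝ᵥ Abar N G g *ᵥ x := by
  have hpsd : (Abar N G g + 1).PosSemidef := by
    rw [Abar_add_one hobs]
    simpa using Ur_posSemidef.conjTranspose_mul_mul_same
      (diagonal fun s => (Real.sqrt (Ur N G g s s))⁻¹)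
  have hnonneg := hpsd.dotProduct_mulVec_nonneg x
  simp only [star_trivial, add_mulVec, one_mulVec, dotProduct_add] at hnonneg
  linarith

lemma dotProduct_Abar_mulVec_eq_zero_of_forall_fst_eq {k : Fin 2} {x : Lvl G → ℝ}
    (hx : ∀ s : Lvl G, s.1 = k → x s = 0) : x ⬝ᵥ Abar N G g *ᵥ x = 0 := by
  refine Finset.sum_eq_zero fun s _ => ?_
  rw [mulVec, dotProduct, Finset.mul_sum]
  refine Finset.sum_eq_zero fun t _ => ?_
  by_cases hs : s.1 = k
  · simp [hx s hs]
  by_cases ht : t.1 = k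
  · simp [hx t ht]
  have hst : s.1 = t.1 := by
    have fin_two : ∀ a b c : Fin 2, a ≠ c → b ≠ c → a = b := by decide
    exact fin_two _ _ _ hs ht
  simp [Abar_eq_zero_of_fst_eq hst]

def factorSign (s : Lvl G) : ℝ := if s.1 = 0 then 1 else -1

lemma diagonal_factorSign_mul_self : diagonal (factorSign (G := G)) * diagonal factorSign = 1 := by
  rw [diagonal_mul_diagonal, ← diagonal_one]
  congr 1
  ext s
  unfold factorSign
  split_ifs <;> norm_num

lemma factorSign_mul_factorSign_of_fst_ne {s t : Lvl G} (h : s.1 ≠ t.1) :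
    factorSign s * factorSign t = -1 := by
  obtain ⟨k, a⟩ := s
  obtain ⟨l, b⟩ := t
  unfold factorSign
  fin_cases k <;> fin_cases l <;> simp_all

lemma diagonal_factorSign_mul_Abar_mul :
    diagonal factorSign * Abar N G g * diagonal factorSign = -Abar N G g := by
  ext s t
  rw [mul_diagonal, diagonal_mul, neg_apply]
  rcases eq_or_ne s.1 t.1 with h | h
  · simp [Abar_eq_zero_of_fst_eq h]
  · linear_combination Abar N G g s t * factorSign_mul_factorSign_of_fst_ne h

lemma factorSign_mulVec_dotProduct_Abar_mulVec (x : Lvl G → ℝ) :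
    (diagonal factorSign *ᵥ x) ⬝ᵥ Abar N G g *ᵥ (diagonal factorSign *ᵥ x) =
      -(x ⬝ᵥ Abar N G g *ᵥ x) := by
  rw [diagonal_mulVec_dotProduct_mulVec, diagonal_factorSign_mul_Abar_mul, neg_mulVec,
    dotProduct_neg]

lemma factorSign_mulVec_dotProduct_self (x : Lvl G → ℝ) :
    (diagonal factorSign *ᵥ x) ⬝ᵥ (diagonal factorSign *ᵥ x) = x ⬝ᵥ x := by
  rw [diagonal_mulVec_dotProduct, mulVec_mulVec, diagonal_factorSign_mul_self, one_mulVec]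

lemma dotProduct_Abar_mulVec_le (hobs : ∀ (k : Fin 2) (a : Fin (G k)), ∃ i, g i k = a)
    (x : Lvl G → ℝ) : x ⬝ᵥ Abar N G g *ᵥ x ≤ x ⬝ᵥ x := by
  have h := neg_dotProduct_self_le_dotProduct_Abar_mulVec hobs (diagonal factorSign *ᵥ x)
  rw [factorSign_mulVec_dotProduct_Abar_mulVec, factorSign_mulVec_dotProduct_self] at h
  linarith

end Design

section Precision
variable {N : ℕ} {G : Fin 2 → ℕ} {g : Fin N → ∀ k : Fin 2, Fin (G k)}
  {T0 : ℝ} {Tv : Fin 2 → ℝ} {τ : ℝ}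

lemma Q_some_some (s t : Lvl G) :
    Q N G g T0 Tv τ (some s) (some t) = (if s = t then Tv s.1 else 0) + τ * Ur N G g s t := by
  simp [Q, U, V, Ur, Vr, diagonal_apply, mul_apply]

lemma Q_some_self_pos (hobs : ∀ (k : Fin 2) (a : Fin (G k)), ∃ i, g i k = a)
    (hTv : ∀ k, 0 ≤ Tv k) (hτ : 0 < τ) (s : Lvl G) : 0 < Q N G g T0 Tv τ (some s) (some s) := by
  rw [Q_some_some, if_pos rfl]
  nlinarith [hTv s.1, Ur_self_pos hobs s]

noncomputable def levelScale (N : ℕ) (G : Fin 2 → ℕ) (g : Fin N → ∀ k : Fin 2, Fin (G k))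
    (T0 : ℝ) (Tv : Fin 2 → ℝ) (τ : ℝ) (s : Lvl G) : ℝ :=
  Real.sqrt τ * Real.sqrt (Ur N G g s s) / Real.sqrt (Q N G g T0 Tv τ (some s) (some s))

lemma levelScale_sq_le_one (hobs : ∀ (k : Fin 2) (a : Fin (G k)), ∃ i, g i k = a)
    (hTv : ∀ k, 0 ≤ Tv k) (hτ : 0 < τ) (s : Lvl G) : levelScale N G g T0 Tv τ s ^ 2 ≤ 1 := by
  have hQ := Q_some_self_pos (T0 := T0) hobs hTv hτ s
  rw [levelScale, div_pow, mul_pow, Real.sq_sqrt hτ.le, Real.sq_sqrt (Ur_self_pos hobs s).le,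
    Real.sq_sqrt hQ.le, div_le_one hQ, Q_some_some, if_pos rfl]
  linarith [hTv s.1]

lemma Qbar_submatrix_some (hobs : ∀ (k : Fin 2) (a : Fin (G k)), ∃ i, g i k = a)
    (hTv : ∀ k, 0 ≤ Tv k) (hτ : 0 < τ) :
    (Qbar N G g T0 Tv τ).submatrix some some = 1 +
      diagonal (levelScale N G g T0 Tv τ) * Abar N G g * diagonal (levelScale N G g T0 Tv τ) := by
  ext s t
  have hQs := Q_some_self_pos (T0 := T0) hobs hTv hτ s
  have hQt := Q_some_self_pos (T0 := T0) hobs hTv hτ t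
  have hUs := Real.sqrt_pos.mpr (Ur_self_pos hobs s)
  have hUt := Real.sqrt_pos.mpr (Ur_self_pos hobs t)
  simp only [Qbar, submatrix_apply, Matrix.add_apply, mul_diagonal, diagonal_mul, one_apply]
  rcases eq_or_ne s t with rfl | hst
  · rw [Abar_eq_zero_of_fst_eq rfl, if_pos rfl, mul_zero, zero_mul, add_zero]
    field_simp
    exact (Real.sq_sqrt hQs.le).symm
  · rw [if_neg hst, Abar_apply, if_neg hst, Q_some_some s t, if_neg hst, levelScale, levelScale]
    field_simp
    rw [Real.sq_sqrt hτ.le]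
    ring

lemma dotProduct_Qbar_mulVec (hobs : ∀ (k : Fin 2) (a : Fin (G k)), ∃ i, g i k = a)
    (hTv : ∀ k, 0 ≤ Tv k) (hτ : 0 < τ) {x : Idx G → ℝ} (hx : x none = 0) :
    x ⬝ᵥ Qbar N G g T0 Tv τ *ᵥ x = x ⬝ᵥ x +
      (diagonal (levelScale N G g T0 Tv τ) *ᵥ (x ∘ some)) ⬝ᵥ Abar N G g *ᵥ
        (diagonal (levelScale N G g T0 Tv τ) *ᵥ (x ∘ some)) := by
  rw [dotProduct_eq_of_none_eq_zero hx, mulVec_comp_some_of_none_eq_zero _ hx,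
    Qbar_submatrix_some hobs hTv hτ, add_mulVec, one_mulVec, dotProduct_add,
    diagonal_mulVec_dotProduct_mulVec, dotProduct_eq_of_none_eq_zero hx]

lemma levelScale_dotProduct_self_le (hobs : ∀ (k : Fin 2) (a : Fin (G k)), ∃ i, g i k = a)
    (hTv : ∀ k, 0 ≤ Tv k) (hτ : 0 < τ) {x : Idx G → ℝ} (hx : x none = 0) :
    (diagonal (levelScale N G g T0 Tv τ) *ᵥ (x ∘ some)) ⬝ᵥ
      (diagonal (levelScale N G g T0 Tv τ) *ᵥ (x ∘ some)) ≤ x ⬝ᵥ x := by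
  rw [dotProduct_eq_of_none_eq_zero hx x]
  refine Finset.sum_le_sum fun s _ => ?_
  simp only [mulVec_diagonal, Function.comp_apply]
  nlinarith [levelScale_sq_le_one (T0 := T0) hobs hTv hτ s, sq_nonneg (x (some s))]

end Precision

section Spectrum
variable {N : ℕ} {G : Fin 2 → ℕ} {g : Fin N → ∀ k : Fin 2, Fin (G k)}
  (hA : (Abar N G g).IsHermitian) {ν : Fin (Fintype.card (Lvl G)) → ℝ} (hνmono : Monotone ν)
  {eA : Lvl G ≃ Fin (Fintype.card (Lvl G))} (hν : ∀ c, hA.eigenvalues c = ν (eA c))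
include hνmono hν

lemma Abar_eigenvalue_le_one (hobs : ∀ (k : Fin 2) (a : Fin (G k)), ∃ i, g i k = a)
    (b : Fin (Fintype.card (Lvl G))) : ν b ≤ 1 :=
  hA.eigenvalue_le_of_forall_orthogonal hνmono hν ![] b (by simpa using b.isLt) fun x _ => by
    simpa using dotProduct_Abar_mulVec_le hobs x

lemma Abar_eigenvalue_nonneg (hp : 3 ≤ ∑ k, G k) (b : Fin (Fintype.card (Lvl G)))
    (hb : (b : ℕ) + 2 = Fintype.card (Lvl G)) : 0 ≤ ν b := by
  have hcard : Fintype.card (Lvl G) = G 0 + G 1 := by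
    simp [Fintype.card_sigma, Fin.sum_univ_two]
  rw [Fin.sum_univ_two] at hp
  -- vectors vanishing on factor `k` live on the other factor, which has at least two levels
  obtain ⟨k, hk⟩ : ∃ k : Fin 2, G k + 2 ≤ Fintype.card (Lvl G) := by
    by_cases h0 : 2 ≤ G 0
    · exact ⟨1, by omega⟩
    · exact ⟨0, by omega⟩
  refine hA.le_eigenvalue_of_forall_orthogonal hνmono hν
    (fun a : Fin (G k) => Pi.single ⟨k, a⟩ 1) b (by rw [Fintype.card_fin]; omega) fun x hx => ?_
  have hxk : ∀ s : Lvl G, s.1 = k → x s = 0 := by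
    rintro ⟨_, a⟩ rfl
    simpa using hx a
  rw [dotProduct_Abar_mulVec_eq_zero_of_forall_fst_eq hxk, zero_mul]

variable (hobs : ∀ (k : Fin 2) (a : Fin (G k)), ∃ i, g i k = a)
  {T0 : ℝ} {Tv : Fin 2 → ℝ} (hTv : ∀ k, 0 ≤ Tv k) {τ : ℝ} (hτ : 0 < τ)
  (hQ : (Qbar N G g T0 Tv τ).IsHermitian) {μ : Fin (Fintype.card (Idx G)) → ℝ}
  (hμmono : Monotone μ) {eQ : Idx G ≃ Fin (Fintype.card (Idx G))}
  (hμ : ∀ c, hQ.eigenvalues c = μ (eQ c))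
  (b : Fin (Fintype.card (Lvl G))) (hb : (b : ℕ) + 2 = Fintype.card (Lvl G)) (hνb : 0 ≤ ν b)
include hobs hTv hτ hμmono hμ hb hνb

lemma Qbar_eigenvalue_le (i : Fin (Fintype.card (Idx G)))
    (hi : (i : ℕ) + 3 ≤ Fintype.card (Idx G)) : μ i ≤ 1 + ν b := by
  have hcard : Fintype.card (Idx G) = Fintype.card (Lvl G) + 1 := Fintype.card_option
  obtain ⟨c, hAbar⟩ := hA.exists_forall_orthogonal_dotProduct_mulVec_le hνmono hν b hb
  refine hQ.eigenvalue_le_of_forall_orthogonal hμmono hμ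
    ![Pi.single none 1,
      Option.elim' 0 (diagonal (levelScale N G g T0 Tv τ) *ᵥ ⇑(hA.eigenvectorBasis c))] i
    (by rw [Fintype.card_fin]; omega) fun x hx => ?_
  have hx0 : x none = 0 := by simpa using hx 0
  have hy := hx 1
  simp only [Matrix.cons_val_one, Matrix.cons_val_fin_one, elim'_zero_dotProduct,
    diagonal_mulVec_dotProduct] at hy
  have hAy := hAbar _ hy
  have hyx := levelScale_dotProduct_self_le (T0 := T0) hobs hTv hτ hx0
  rw [dotProduct_Qbar_mulVec hobs hTv hτ hx0]
  nlinarith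

lemma le_Qbar_eigenvalue (j : Fin (Fintype.card (Idx G))) (hj : 2 ≤ (j : ℕ)) :
    1 - ν b ≤ μ j := by
  obtain ⟨c, hAbar⟩ := hA.exists_forall_orthogonal_dotProduct_mulVec_le hνmono hν b hb
  refine hQ.le_eigenvalue_of_forall_orthogonal hμmono hμ
    ![Pi.single none 1, Option.elim' 0 (diagonal (levelScale N G g T0 Tv τ) *ᵥ
      diagonal factorSign *ᵥ ⇑(hA.eigenvectorBasis c))] j
    (by rw [Fintype.card_fin]; omega) fun x hx => ?_
  have hx0 : x none = 0 := by simpa using hx 0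
  have hy := hx 1
  simp only [Matrix.cons_val_one, Matrix.cons_val_fin_one, elim'_zero_dotProduct,
    diagonal_mulVec_dotProduct] at hy
  have hAy := hAbar _ hy
  rw [factorSign_mulVec_dotProduct_Abar_mulVec, factorSign_mulVec_dotProduct_self] at hAy
  have hyx := levelScale_dotProduct_self_le (T0 := T0) hobs hTv hτ hx0
  rw [dotProduct_Qbar_mulVec hobs hTv hτ hx0]
  nlinarith

end Spectrum

theorem bipartite_condition_number_bound_general (N : ℕ) (G : Fin 2 → ℕ)
    (g : Fin N → ∀ k : Fin 2, Fin (G k))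
    (hp : 3 ≤ ∑ k, G k)
    (hobs : ∀ (k : Fin 2) (a : Fin (G k)), ∃ i, g i k = a)
    (T0 : ℝ) (Tv : Fin 2 → ℝ) (τ : ℝ)
    (hTv : ∀ k, 0 ≤ Tv k) (hτ : 0 < τ)
    (hQ : (Qbar N G g T0 Tv τ).IsHermitian)
    (μ : Fin (Fintype.card (Idx G)) → ℝ) (hμmono : Monotone μ)
    (eQ : Idx G ≃ Fin (Fintype.card (Idx G)))
    (hμ : ∀ c, hQ.eigenvalues c = μ (eQ c))
    (hA : (Abar N G g).IsHermitian)
    (ν : Fin (Fintype.card (Lvl G)) → ℝ) (hνmono : Monotone ν)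
    (eA : Lvl G ≃ Fin (Fintype.card (Lvl G)))
    (hν : ∀ c, hA.eigenvalues c = ν (eA c)) :
    ∀ (i j : Fin (Fintype.card (Idx G))) (b : Fin (Fintype.card (Lvl G))),
      (i : ℕ) = Fintype.card (Idx G) - 3 → (j : ℕ) = 2 →
      (b : ℕ) = Fintype.card (Lvl G) - 2 →
      μ i * (1 - ν b) ≤ μ j * (1 + ν b) := by
  intro i j b hi hj hb
  have hcard : Fintype.card (Idx G) = Fintype.card (Lvl G) + 1 := Fintype.card_option
  have hm : 3 ≤ Fintype.card (Lvl G) := by simpa [Fintype.card_sigma] using hp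
  have hb2 : (b : ℕ) + 2 = Fintype.card (Lvl G) := by omega
  have hν0 : 0 ≤ ν b := Abar_eigenvalue_nonneg hA hνmono hν hp b hb2
  have hν1 : ν b ≤ 1 := Abar_eigenvalue_le_one hA hνmono hν hobs b
  have hupper : μ i ≤ 1 + ν b :=
    Qbar_eigenvalue_le hA hνmono hν hobs hTv hτ hQ hμmono hμ b hb2 hν0 i (by omega)
  have hlower : 1 - ν b ≤ μ j :=
    le_Qbar_eigenvalue hA hνmono hν hobs hTv hτ hQ hμmono hμ b hb2 hν0 j (by omega)
  calc μ i * (1 - ν b) ≤ (1 + ν b) * (1 - ν b) := by gcongr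
    _ = (1 - ν b) * (1 + ν b) := by ring
    _ ≤ μ j * (1 + ν b) := by gcongr

/-- Corollary 3 of the paper (`K = 2`): `μ̄_{p−2}·(1 − ν̄_{p−2}) ≤ μ̄₃·(1 + ν̄_{p−2})`,
i.e. `κ_{3,p−2}(Q̄) ≤ (1 + ν̄_{p−2})/(1 − ν̄_{p−2})` whenever `ν̄_{p−2} < 1`.
(Sorted eigenvalues: `μ̄_{p−2}` is `μ` at 0-based index `p−3`, `μ̄₃` at index `2`,
`ν̄_{p−2}` at 0-based index `(p−1)−2` of the `p−1` eigenvalues of `Ā^(r)`.) -/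
theorem bipartite_condition_number_bound (N : ℕ) (G : Fin 2 → ℕ)
    (g : Fin N → ∀ k : Fin 2, Fin (G k))
    (hGk : ∀ k, 1 ≤ G k) (hN : 1 ≤ N)
    (hp : 3 ≤ ∑ k, G k)
    (hobs : ∀ (k : Fin 2) (a : Fin (G k)), ∃ i, g i k = a)
    (T0 : ℝ) (Tv : Fin 2 → ℝ) (τ : ℝ)
    (hT0 : 0 ≤ T0) (hTv : ∀ k, 0 ≤ Tv k) (hτ : 0 < τ)
    (hQ : (Qbar N G g T0 Tv τ).IsHermitian)
    (μ : Fin (Fintype.card (Idx G)) → ℝ) (hμmono : Monotone μ)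
    (eQ : Idx G ≃ Fin (Fintype.card (Idx G)))
    (hμ : ∀ c, hQ.eigenvalues c = μ (eQ c))
    (hA : (Abar N G g).IsHermitian)
    (ν : Fin (Fintype.card (Lvl G)) → ℝ) (hνmono : Monotone ν)
    (eA : Lvl G ≃ Fin (Fintype.card (Lvl G)))
    (hν : ∀ c, hA.eigenvalues c = ν (eA c)) :
    ∀ (i j : Fin (Fintype.card (Idx G))) (b : Fin (Fintype.card (Lvl G))),
      (i : ℕ) = Fintype.card (Idx G) - 3 → (j : ℕ) = 2 →
      (b : ℕ) = Fintype.card (Lvl G) - 2 →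
      μ i * (1 - ν b) ≤ μ j * (1 + ν b) :=
  bipartite_condition_number_bound_general N G g hp hobs T0 Tv τ hTv hτ hQ μ hμmono eQ hμ hA ν
    hνmono eA hν

end Crossed2
end

section
/- Under the random-intercept crossed effects design with K ≥ 2, for distinct factors k ≠ h let B_{k,h} be the simple bipartite graph whose vertices are the levels of factors k and h, with an edge between (k,g) and (h,g′) if and only if there is an observation i with g_k[i] = g and g_h[i] = g′. Fix any permutation π of {1,…,K} and, for ℓ = 1,…,K−1, let C_ℓ be the number of connected components of B_{π(ℓ),π(ℓ+1)}. Then the kernel of U^(r) has dimension at least ∑_{ℓ=1}^{K−1} C_ℓ; equivalently, the symmetric matrix Ā^(r) has the eigenvalue −1/(K−1) with multiplicity at least ∑_{ℓ=1}^{K−1} C_ℓ. -/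
/-! For consecutive factors `k = π ℓ`, `h = π (ℓ+1)` and a connected component `c` of `B_{k,h}`,
the vector equal to `+1` on the levels of `k` in `c` and `-1` on the levels of `h` in `c` is
killed by `V^(r)`: an observation meets one level of each factor, and these two levels are
adjacent, hence lie in the same component. Each component contains a level of `k`, a factor no
later pair involves, so ordering these vectors by `ℓ` makes them triangular and hence linearly
independent. Finally `x ↦ D^{1/2} x` maps `ker U^(r)` injectively into the `-1/(K-1)`-eigenspace
of `Ā^(r)`, because `Ā^(r) D^{1/2} x = -D^{-1/2} Diag(U^(r)) x = -(K-1)⁻¹ D^{1/2} x` when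
`U^(r) x = 0`. -/

open Matrix

namespace Crossed

/-- The adjacency relation of the bipartite graph between the levels of factors `k`
and `h`: `(k,a)` and `(h,b)` are connected iff they are observed together. -/
def BipRel (K N : ℕ) (G : Fin K → ℕ) (g : Fin N → ∀ k : Fin K, Fin (G k))
    (k h : Fin K) : (Fin (G k) ⊕ Fin (G h)) → (Fin (G k) ⊕ Fin (G h)) → Prop
  | Sum.inl a, Sum.inr b => ∃ i, g i k = a ∧ g i h = b
  | Sum.inr b, Sum.inl a => ∃ i, g i k = a ∧ g i h = b
  | _, _ => False

/-- The bipartite graph `B_{k,h}` between the levels of factors `k` and `h`. -/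
def BipGraph (K N : ℕ) (G : Fin K → ℕ) (g : Fin N → ∀ k : Fin K, Fin (G k))
    (k h : Fin K) : SimpleGraph (Fin (G k) ⊕ Fin (G h)) where
  Adj := BipRel K N G g k h
  symm := by
    constructor
    intro x y hxy
    cases x <;> cases y <;> simpa [BipRel] using hxy
  loopless := by
    constructor
    intro x hx
    cases x <;> simpa [BipRel] using hx

end Crossed

theorem linearIndependent_of_pivot {ι α β R : Type*} [Ring R] [NoZeroDivisors R] [Fintype ι]
    [Preorder β] [WellFoundedLT β] (v : ι → α → R) (p : ι → α) (r : ι → β)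
    (hpivot : ∀ i, v i (p i) ≠ 0) (hlower : ∀ i j, j ≠ i → v j (p i) ≠ 0 → r j < r i) :
    LinearIndependent R v := by
  rw [Fintype.linearIndependent_iff]
  intro f hf
  suffices ∀ b i, r i = b → f i = 0 from fun i => this (r i) i rfl
  intro b
  induction b using WellFoundedLT.induction with
  | _ b ih =>
    rintro i rfl
    have hsum := congrFun hf (p i)
    simp only [Finset.sum_apply, Pi.smul_apply, smul_eq_mul, Pi.zero_apply] at hsum
    rw [Finset.sum_eq_single i (fun j _ hji => ?_) (by simp)] at hsum
    · exact (mul_eq_zero.1 hsum).resolve_right (hpivot i)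
    · by_cases hv : v j (p i) = 0
      · rw [hv, mul_zero]
      · rw [ih (r j) (hlower i j hji hv) j rfl, zero_mul]

namespace Matrix

variable {α 𝕜 : Type*} [Fintype α] [DecidableEq α] [Field 𝕜]

theorem diagonal_mulVec_mem_eigenspace_of_mulVec_eq_zero (M : Matrix α α 𝕜) {t : 𝕜}
    (ht : t ≠ 0) {d : α → 𝕜} (hd : ∀ c, d c ≠ 0) (hdd : ∀ c, d c * d c = t * M c c)
    {x : α → 𝕜} (hx : M *ᵥ x = 0) :
    diagonal d *ᵥ x ∈ Module.End.eigenspace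
      (diagonal (fun c => (d c)⁻¹) * (M - diagonal (fun c => M c c)) *
        diagonal (fun c => (d c)⁻¹)).mulVecLin (-1 / t) := by
  have hunscale : diagonal (fun c => (d c)⁻¹) *ᵥ (diagonal d *ᵥ x) = x := by
    ext c
    simp only [mulVec_diagonal, inv_mul_cancel_left₀ (hd c)]
  rw [Module.End.mem_eigenspace_iff, mulVecLin_apply, ← mulVec_mulVec, ← mulVec_mulVec, hunscale,
    sub_mulVec, hx]
  ext c
  simp only [mulVec_diagonal, zero_sub, Pi.neg_apply, Pi.smul_apply, smul_eq_mul]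
  field_simp
  rw [neg_inj, div_eq_iff (hd c)]
  linear_combination -x c * hdd c

theorem finrank_ker_le_finrank_eigenspace_of_mul_self_eq (M : Matrix α α 𝕜) {t : 𝕜}
    (ht : t ≠ 0) {d : α → 𝕜} (hd : ∀ c, d c ≠ 0) (hdd : ∀ c, d c * d c = t * M c c) :
    Module.finrank 𝕜 (LinearMap.ker M.mulVecLin) ≤ Module.finrank 𝕜 (Module.End.eigenspace
      (diagonal (fun c => (d c)⁻¹) * (M - diagonal (fun c => M c c)) *
        diagonal (fun c => (d c)⁻¹)).mulVecLin (-1 / t)) := by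
  let rescale := ((diagonal d).mulVecLin.comp (LinearMap.ker M.mulVecLin).subtype).codRestrict _
    fun x => diagonal_mulVec_mem_eigenspace_of_mulVec_eq_zero M ht hd hdd x.2
  refine LinearMap.finrank_le_finrank_of_injective (f := rescale) fun x y hxy => ?_
  ext c
  have hc : diagonal d *ᵥ x.1 = diagonal d *ᵥ y.1 := congrArg Subtype.val hxy
  simpa only [mulVec_diagonal, mul_right_inj' (hd c)] using congrFun hc c

end Matrix

namespace Crossed

variable {K N : ℕ} {G : Fin K → ℕ} {g : Fin N → ∀ k : Fin K, Fin (G k)}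

theorem Vr_mulVec_apply (v : Lvl K G → ℝ) (i : Fin N) :
    (Vr K N G g *ᵥ v) i = ∑ k, v ⟨k, g i k⟩ := by
  simp only [mulVec, dotProduct, Vr, ite_mul, one_mul, zero_mul]
  rw [← Finset.univ_sigma_univ, Finset.sum_sigma]
  simp

theorem Ur_apply_self_pos (hobs : ∀ (k : Fin K) (a : Fin (G k)), ∃ i, g i k = a)
    (c : Lvl K G) : 0 < Ur K N G g c c := by
  obtain ⟨i, hi⟩ := hobs c.1 c.2
  rw [Ur, mul_apply]
  refine Finset.sum_pos' (fun j _ => mul_self_nonneg _) ⟨i, Finset.mem_univ i, ?_⟩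
  simp [Vr, hi]

section SignedIndicator

open scoped Classical

variable {k h : Fin K} (c : (BipGraph K N G g k h).ConnectedComponent)

variable (k h) in
noncomputable def signedIndicator : Lvl K G → ℝ := fun s =>
  (if hs : s.1 = k then
    if (BipGraph K N G g k h).connectedComponentMk (.inl (Fin.cast (congrArg G hs) s.2)) = c
    then 1 else 0 else 0) -
  (if hs : s.1 = h then
    if (BipGraph K N G g k h).connectedComponentMk (.inr (Fin.cast (congrArg G hs) s.2)) = c
    then 1 else 0 else 0)

theorem signedIndicator_apply_left (hkh : k ≠ h) (a : Fin (G k)) :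
    signedIndicator k h c ⟨k, a⟩ =
      if (BipGraph K N G g k h).connectedComponentMk (.inl a) = c then 1 else 0 := by
  simp [signedIndicator, hkh]

theorem signedIndicator_apply_right (hkh : k ≠ h) (b : Fin (G h)) :
    signedIndicator k h c ⟨h, b⟩ =
      -if (BipGraph K N G g k h).connectedComponentMk (.inr b) = c then 1 else 0 := by
  simp [signedIndicator, hkh.symm]

theorem signedIndicator_apply_of_ne {s : Lvl K G} (hk : s.1 ≠ k) (hh : s.1 ≠ h) :
    signedIndicator k h c s = 0 := by
  simp [signedIndicator, hk, hh]

theorem Vr_mulVec_signedIndicator (hkh : k ≠ h) : Vr K N G g *ᵥ signedIndicator k h c = 0 := by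
  ext i
  have hsame : (BipGraph K N G g k h).connectedComponentMk (.inl (g i k)) =
      (BipGraph K N G g k h).connectedComponentMk (.inr (g i h)) :=
    SimpleGraph.ConnectedComponent.sound (SimpleGraph.Adj.reachable ⟨i, rfl, rfl⟩)
  rw [Vr_mulVec_apply, Finset.sum_eq_add k h hkh
    (fun f _ hf => signedIndicator_apply_of_ne c hf.1 hf.2) (by simp) (by simp),
    signedIndicator_apply_left c hkh, signedIndicator_apply_right c hkh, hsame]
  simp

theorem signedIndicator_mem_ker_Ur (hkh : k ≠ h) :
    signedIndicator k h c ∈ LinearMap.ker (Ur K N G g).mulVecLin := by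
  rw [LinearMap.mem_ker, mulVecLin_apply, Ur, ← mulVec_mulVec, Vr_mulVec_signedIndicator c hkh,
    mulVec_zero]

end SignedIndicator

theorem exists_connectedComponentMk_inl_eq {k h : Fin K} (hobs : ∀ b : Fin (G h), ∃ i, g i h = b)
    (c : (BipGraph K N G g k h).ConnectedComponent) :
    ∃ a, (BipGraph K N G g k h).connectedComponentMk (.inl a) = c := by
  obtain ⟨v, rfl⟩ := c.exists_rep
  rcases v with a | b
  · exact ⟨a, rfl⟩
  · obtain ⟨i, rfl⟩ := hobs b
    exact ⟨g i k, SimpleGraph.ConnectedComponent.sound (SimpleGraph.Adj.reachable ⟨i, rfl, rfl⟩)⟩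

open scoped Classical in
theorem sum_card_connectedComponent_le_finrank_ker_Ur {n : ℕ} (k h : Fin n → Fin K)
    (hkh : ∀ l, k l ≠ h l) (hlater : ∀ l l', l < l' → k l ≠ k l' ∧ k l ≠ h l')
    (hobs : ∀ l (b : Fin (G (h l))), ∃ i, g i (h l) = b) :
    ∑ l, Nat.card (BipGraph K N G g (k l) (h l)).ConnectedComponent ≤
      Module.finrank ℝ (LinearMap.ker (Ur K N G g).mulVecLin) := by
  choose a ha using fun l => exists_connectedComponentMk_inl_eq (k := k l) (hobs l)
  let w : (Σ l, (BipGraph K N G g (k l) (h l)).ConnectedComponent) → Lvl K G → ℝ :=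
    fun x => signedIndicator (k x.1) (h x.1) x.2
  -- the level `a l c` of factor `k l` meets only `c` and components of earlier pairs
  have hli : LinearIndependent ℝ w := by
    refine linearIndependent_of_pivot w (fun x => ⟨k x.1, a x.1 x.2⟩) Sigma.fst
      (fun ⟨l, c⟩ => by simp [w, signedIndicator_apply_left c (hkh l), ha]) ?_
    rintro ⟨l, c⟩ ⟨l', c'⟩ hne hw
    dsimp only [w] at hw ⊢
    rcases lt_trichotomy l' l with hlt | rfl | hgt
    · exact hlt
    · rw [signedIndicator_apply_left c' (hkh l'), ha] at hw
      exact absurd (by simpa using hw) (by simpa [eq_comm] using hne)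
    · exact absurd (signedIndicator_apply_of_ne c' (hlater l l' hgt).1 (hlater l l' hgt).2) hw
  calc ∑ l, Nat.card (BipGraph K N G g (k l) (h l)).ConnectedComponent
      = Module.finrank ℝ (Submodule.span ℝ (Set.range w)) := by
        rw [finrank_span_eq_card hli, ← Nat.card_eq_fintype_card, Nat.card_sigma]
    _ ≤ Module.finrank ℝ (LinearMap.ker (Ur K N G g).mulVecLin) :=
        Submodule.finrank_mono (Submodule.span_le.2 (Set.range_subset_iff.2 fun x =>
          signedIndicator_mem_ker_Ur x.2 (hkh x.1)))

theorem pairwise_connectivity_necessary_general (K N : ℕ) (G : Fin K → ℕ)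
    (g : Fin N → ∀ k : Fin K, Fin (G k))
    (hK : 2 ≤ K)
    (hobs : ∀ (k : Fin K) (a : Fin (G k)), ∃ i, g i k = a)
    (π : Equiv.Perm (Fin K)) :
    (∑ l : Fin (K - 1),
        Nat.card (BipGraph K N G g
          (π ⟨l.val, lt_of_lt_of_le l.isLt (Nat.sub_le K 1)⟩)
          (π ⟨l.val + 1, Nat.add_lt_of_lt_sub l.isLt⟩)).ConnectedComponent)
      ≤ Module.finrank ℝ ↥(LinearMap.ker (Ur K N G g).mulVecLin) ∧
    (∑ l : Fin (K - 1),
        Nat.card (BipGraph K N G g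
          (π ⟨l.val, lt_of_lt_of_le l.isLt (Nat.sub_le K 1)⟩)
          (π ⟨l.val + 1, Nat.add_lt_of_lt_sub l.isLt⟩)).ConnectedComponent)
      ≤ Module.finrank ℝ
          ↥(Module.End.eigenspace (Abar K N G g).mulVecLin (-1 / ((K : ℝ) - 1))) := by
  have hker := sum_card_connectedComponent_le_finrank_ker_Ur (g := g)
    (fun l => π ⟨l.val, lt_of_lt_of_le l.isLt (Nat.sub_le K 1)⟩)
    (fun l => π ⟨l.val + 1, Nat.add_lt_of_lt_sub l.isLt⟩)
    (fun l hl => by simpa [Fin.ext_iff] using π.injective hl)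
    (fun l l' hll' => ⟨fun hl => hll'.ne (by simpa [Fin.ext_iff] using π.injective hl),
      fun hl => by have := Fin.ext_iff.1 (π.injective hl); simp at this; omega⟩)
    (fun _ => hobs _)
  have hK1 : (0 : ℝ) < K - 1 := by
    have : (2 : ℝ) ≤ K := by exact_mod_cast hK
    linarith
  have hscale (c : Lvl K G) : 0 < ((K : ℝ) - 1) * Ur K N G g c c :=
    mul_pos hK1 (Ur_apply_self_pos hobs c)
  refine ⟨hker, hker.trans ?_⟩
  exact Matrix.finrank_ker_le_finrank_eigenspace_of_mul_self_eq _ hK1.ne'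
    (fun c => (Real.sqrt_pos.2 (hscale c)).ne') (fun c => Real.mul_self_sqrt (hscale c).le)

/-- Theorem 6 of the paper: for any permutation `π` of the factors, the kernel of
`U^(r)` has dimension at least `∑_{ℓ=1}^{K−1} C_ℓ`, where `C_ℓ` is the number of
connected components of the bipartite graph between factors `π(ℓ)` and `π(ℓ+1)`;
equivalently, `Ā^(r)` has the eigenvalue `−1/(K−1)` with multiplicity at least
`∑_ℓ C_ℓ`. -/
theorem pairwise_connectivity_necessary (K N : ℕ) (G : Fin K → ℕ)
    (g : Fin N → ∀ k : Fin K, Fin (G k))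
    (hK : 2 ≤ K) (hGk : ∀ k, 1 ≤ G k) (hN : 1 ≤ N)
    (hobs : ∀ (k : Fin K) (a : Fin (G k)), ∃ i, g i k = a)
    (π : Equiv.Perm (Fin K)) :
    (∑ l : Fin (K - 1),
        Nat.card (BipGraph K N G g
          (π ⟨l.val, lt_of_lt_of_le l.isLt (Nat.sub_le K 1)⟩)
          (π ⟨l.val + 1, Nat.add_lt_of_lt_sub l.isLt⟩)).ConnectedComponent)
      ≤ Module.finrank ℝ ↥(LinearMap.ker (Ur K N G g).mulVecLin) ∧
    (∑ l : Fin (K - 1),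
        Nat.card (BipGraph K N G g
          (π ⟨l.val, lt_of_lt_of_le l.isLt (Nat.sub_le K 1)⟩)
          (π ⟨l.val + 1, Nat.add_lt_of_lt_sub l.isLt⟩)).ConnectedComponent)
      ≤ Module.finrank ℝ
          ↥(Module.End.eigenspace (Abar K N G g).mulVecLin (-1 / ((K : ℝ) - 1))) :=
  pairwise_connectivity_necessary_general K N G g hK hobs π

end Crossed
end
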